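/- Let H, K be real Hilbert spaces, C: H → 2^H and D: K → 2^K maximally monotone, L: H → K bounded linear, γ > 0. Define A(x,y*) = Cx × D^{-1}y* and B(x,y*) = (L*y*, −Lx) on H × K. Then for every (x,y*) ∈ H × K, H_A((x,y*), −B(x,y*)) ≥ (‖x − J_{γC}(x − γL*y*)‖² + ‖y* − J_{γD^{-1}}(y* + γLx)‖²)/γ. -/

import Mathlib

open scoped RealInnerProductSpace

variable {H : Type*} {K : Type*}
  [NormedAddCommGroup H] [InnerProductSpace ℝ H] [CompleteSpace H]
  [NormedAddCommGroup K] [InnerProductSpace ℝ K] [CompleteSpace K]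

/-- Monotonicity on a real Hilbert space. -/
def IsMonotoneH {E : Type*} [NormedAddCommGroup E] [InnerProductSpace ℝ E]
    (A : E → Set E) : Prop :=
  ∀ ⦃x x' y y'⦄, x' ∈ A x → y' ∈ A y → (0 : ℝ) ≤ ⟪x - y, x' - y'⟫

/-- Maximal monotonicity on a real Hilbert space. -/
def IsMaxMonotoneH {E : Type*} [NormedAddCommGroup E] [InnerProductSpace ℝ E]
    (A : E → Set E) : Prop :=
  IsMonotoneH A ∧
    ∀ ⦃x x'⦄, (∀ ⦃y y'⦄, y' ∈ A y → (0 : ℝ) ≤ ⟪x - y, x' - y'⟫) → x' ∈ A x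

/-- The primal-dual operator `A(x,y*) = Cx × D⁻¹y*`. -/
def opA (C : H → Set H) (D : K → Set K) : (H × K) → Set (H × K) :=
  fun p => (C p.1) ×ˢ {y : K | p.2 ∈ D y}

/-- The skew operator `B(x,y*) = (L*y*, −Lx)`. -/
noncomputable def opB (L : H →L[ℝ] K) : (H × K) → (H × K) :=
  fun p => ((ContinuousLinearMap.adjoint L) p.2, -(L p.1))

/-- The Haraux function on the product Hilbert space `H × K`. -/
noncomputable def harauxP (A : (H × K) → Set (H × K)) (x u : H × K) : EReal :=
  ⨆ (q : (H × K) × (H × K)) (_ : q.2 ∈ A q.1),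
    (((⟪x.1 - q.1.1, q.2.1 - u.1⟫ + ⟪x.2 - q.1.2, q.2.2 - u.2⟫ : ℝ)) : EReal)

/-! Evaluating the supremum defining the Haraux function at the resolvent points already gives
the bound: if `p = J_{γC}(x - γL*y*)` and `s = J_{γD⁻¹}(y* + γLx)`, the resolvent equations
make `(p, s)` carry a graph element of `A` that is exactly `γ⁻¹ • ((x, y*) - (p, s))` away from
`-B(x, y*)`, so the corresponding term of the supremum equals `‖(x, y*) - (p, s)‖² / γ`. -/

theorem sub_eq_inv_smul_sub_of_add_smul_eq {E : Type*} [AddCommGroup E] [Module ℝ E]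
    {γ : ℝ} (hγ : γ ≠ 0) {x p a b : E} (h : x + γ • b = p + γ • a) :
    a - b = γ⁻¹ • (x - p) := by
  rw [eq_sub_of_add_eq h, add_sub_assoc, add_sub_cancel_left, ← smul_sub, inv_smul_smul₀ hγ]

theorem inner_inv_smul_self_eq_norm_sq_div {E : Type*} [NormedAddCommGroup E]
    [InnerProductSpace ℝ E] (γ : ℝ) (v : E) : ⟪v, γ⁻¹ • v⟫ = ‖v‖ ^ 2 / γ := by
  rw [real_inner_smul_right, real_inner_self_eq_norm_sq, inv_mul_eq_div]

theorem le_harauxP {H K : Type*} [NormedAddCommGroup H] [InnerProductSpace ℝ H]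
    [NormedAddCommGroup K] [InnerProductSpace ℝ K] {A : H × K → Set (H × K)}
    {q : (H × K) × (H × K)} (hq : q.2 ∈ A q.1) (x u : H × K) :
    (((⟪x.1 - q.1.1, q.2.1 - u.1⟫ + ⟪x.2 - q.1.2, q.2.2 - u.2⟫ : ℝ)) : EReal)
      ≤ harauxP A x u :=
  le_iSup₂ (f := fun (q : (H × K) × (H × K)) (_ : q.2 ∈ A q.1) =>
    (((⟪x.1 - q.1.1, q.2.1 - u.1⟫ + ⟪x.2 - q.1.2, q.2.2 - u.2⟫ : ℝ)) : EReal)) q hq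

theorem haraux_primal_dual_lower_bound_general
    (C : H → Set H) (D : K → Set K)
    (L : H →L[ℝ] K) (γ : ℝ) (hγ : 0 < γ)
    (JC : H → H) (hJC : ∀ w : H, ∃ a ∈ C (JC w), w = JC w + γ • a)
    (JD : K → K) (hJD : ∀ w : K, ∃ a : K, JD w ∈ D a ∧ w = JD w + γ • a)
    (x : H) (y : K) :
    (((‖x - JC (x - γ • (ContinuousLinearMap.adjoint L) y)‖ ^ 2
        + ‖y - JD (y + γ • L x)‖ ^ 2) / γ : ℝ) : EReal)
      ≤ harauxP (opA C D) (x, y) (-(opB L (x, y))) := by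
  obtain ⟨a, haC, hp⟩ := hJC (x - γ • (ContinuousLinearMap.adjoint L) y)
  obtain ⟨b, hsD, hs⟩ := hJD (y + γ • L x)
  set p := JC (x - γ • (ContinuousLinearMap.adjoint L) y)
  set s := JD (y + γ • L x)
  rw [sub_eq_add_neg, ← smul_neg] at hp
  have ha := sub_eq_inv_smul_sub_of_add_smul_eq hγ.ne' hp
  have hb := sub_eq_inv_smul_sub_of_add_smul_eq hγ.ne' hs
  convert le_harauxP (A := opA C D) (q := ((p, s), (a, b))) ⟨haC, hsD⟩ (x, y) (-(opB L (x, y)))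
    using 2
  simp only [opB, Prod.neg_mk, neg_neg, ha, hb, inner_inv_smul_self_eq_norm_sq_div, add_div]

/-- Primal-dual lower bound: for maximally monotone `C`, `D`, bounded linear `L`
and `γ > 0`, with `A(x,y*) = Cx × D⁻¹y*` and `B(x,y*) = (L*y*, −Lx)`,
`H_A((x,y*), −B(x,y*)) ≥ (‖x − J_{γC}(x − γL*y*)‖² + ‖y* − J_{γD⁻¹}(y* + γLx)‖²)/γ`. -/
theorem haraux_primal_dual_lower_bound
    (C : H → Set H) (D : K → Set K)
    (hC : IsMaxMonotoneH C) (hD : IsMaxMonotoneH D)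
    (L : H →L[ℝ] K) (γ : ℝ) (hγ : 0 < γ)
    (JC : H → H) (hJC : ∀ w : H, ∃ a ∈ C (JC w), w = JC w + γ • a)
    (JD : K → K) (hJD : ∀ w : K, ∃ a : K, JD w ∈ D a ∧ w = JD w + γ • a)
    (x : H) (y : K) :
    (((‖x - JC (x - γ • (ContinuousLinearMap.adjoint L) y)‖ ^ 2
        + ‖y - JD (y + γ • L x)‖ ^ 2) / γ : ℝ) : EReal)
      ≤ harauxP (opA C D) (x, y) (-(opB L (x, y))) :=
  haraux_primal_dual_lower_bound_general C D L γ hγ JC hJC JD hJD x y
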